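/- arXiv:2410.22701 — 2 statements merged into one kernel-verified Lean document; each statement's English description precedes it below -/
import Mathlib

section
/- Let (ψ_n) be a sequence of Carathéodory functions and let ψ be a Carathéodory function. Then (ψ_n) converges to ψ uniformly on compact subsets of 𝔻 if and only if for every ℓ ∈ ℕ the Taylor coefficients satisfy a_{ψ_n}(ℓ) → a_ψ(ℓ) as n → ∞. -/
open MeasureTheory Metric Complex Filter Topology
open scoped ENNReal NNReal

noncomputable section

instance : MeasurableSpace Circle := borel Circle
instance : BorelSpace Circle := ⟨rfl⟩

/-- The normalized Haar (Lebesgue) probability measure on the circle. -/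
def haarCircle : Measure Circle :=
  Measure.haarMeasure (⊤ : TopologicalSpace.PositiveCompacts Circle)

/-- A measure on the circle is `×n`-invariant. -/
def MulInvariant (n : ℕ) (μ : Measure Circle) : Prop :=
  ∀ f : C(Circle, ℂ), ∫ ω, f (ω ^ n) ∂μ = ∫ ω, f ω ∂μ

/-- `×(2,3)`-invariant Borel probability measures. -/
def Inv23 (μ : Measure Circle) : Prop :=
  IsProbabilityMeasure μ ∧ MulInvariant 2 μ ∧ MulInvariant 3 μ

/-- Ergodicity of a `×(2,3)`-invariant probability measure. -/
def Ergodic23 (μ : Measure Circle) : Prop :=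
  Inv23 μ ∧ ∀ (κ ν : Measure Circle) (t : ℝ≥0∞), Inv23 κ → Inv23 ν →
    0 < t → t < 1 → μ = t • κ + (1 - t) • ν → κ = μ ∧ ν = μ

/-- The support of a measure: the minimal closed set of full measure. -/
def msupport (μ : Measure Circle) : Set Circle :=
  ⋂₀ {s : Set Circle | IsClosed s ∧ μ s = 1}

/-- Vague convergence of measures on the circle. -/
def VagueTendsto (μs : ℕ → Measure Circle) (μ : Measure Circle) : Prop :=
  ∀ f : C(Circle, ℂ),
    Tendsto (fun n => ∫ ω, f ω ∂(μs n)) atTop (𝓝 (∫ ω, f ω ∂μ))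

/-- The `ℓ`-th Fourier coefficient of a measure on the circle. -/
def fourierCoef (μ : Measure Circle) (ℓ : ℤ) : ℂ :=
  ∫ ω, (ω : ℂ) ^ (-ℓ) ∂μ

/-- The Herglotz transform of a measure on the circle. -/
def herglotz (μ : Measure Circle) (z : ℂ) : ℂ :=
  ∫ ω, ((ω : ℂ) + z) / ((ω : ℂ) - z) ∂μ

/-- Carathéodory function: holomorphic on the unit disk, positive real part, `ψ 0 = 1`. -/
def IsCara (ψ : ℂ → ℂ) : Prop :=
  DifferentiableOn ℂ ψ (ball (0 : ℂ) 1) ∧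
    (∀ z ∈ ball (0 : ℂ) 1, 0 < (ψ z).re) ∧ ψ 0 = 1

/-- `×n`-circularity of a function on the unit disk. -/
def IsCircular (n : ℕ) (ψ : ℂ → ℂ) : Prop :=
  ∀ z ∈ ball (0 : ℂ) 1,
    ψ (z ^ n) = (n : ℂ)⁻¹ *
      ∑ k ∈ Finset.range n, ψ (Complex.exp (2 * Real.pi * Complex.I * k / n) * z)

/-- Membership in `Cara(𝔻;2,3)`. -/
def Cara23 (ψ : ℂ → ℂ) : Prop := IsCara ψ ∧ IsCircular 2 ψ ∧ IsCircular 3 ψ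

/-- Extreme points of `Cara(𝔻;2,3)`. -/
def ExtremeCara23 (ψ : ℂ → ℂ) : Prop :=
  Cara23 ψ ∧ ∀ (α β : ℂ → ℂ) (t : ℝ), Cara23 α → Cara23 β → 0 < t → t < 1 →
    (∀ z ∈ ball (0 : ℂ) 1, ψ z = t * α z + (1 - t) * β z) →
    Set.EqOn α ψ (ball (0 : ℂ) 1) ∧ Set.EqOn β ψ (ball (0 : ℂ) 1)

/-- A function is rational on the disk. -/
def RationalOnDisk (ψ : ℂ → ℂ) : Prop :=
  ∃ p q : Polynomial ℂ, (∀ z ∈ ball (0 : ℂ) 1, q.eval z ≠ 0) ∧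
    ∀ z ∈ ball (0 : ℂ) 1, ψ z = p.eval z / q.eval z

/-- Uniform convergence on compact subsets of the unit disk. -/
def CompactUniformTendsto (ψs : ℕ → ℂ → ℂ) (ψ : ℂ → ℂ) : Prop :=
  ∀ K : Set ℂ, K ⊆ ball (0 : ℂ) 1 → IsCompact K →
    TendstoUniformlyOn (fun n => ψs n) ψ atTop K

/-- The `ℓ`-th Taylor coefficient at `0` of a function on the disk. -/
def taylorCoef (f : ℂ → ℂ) (ℓ : ℕ) : ℂ :=
  iteratedDeriv ℓ f 0 / (ℓ.factorial : ℂ)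

/-- The `×(2,3)`-orbit of a point of the circle. -/
def orbit23 (ω : Circle) : Set Circle :=
  {ϑ : Circle | ∃ j k : ℕ, ϑ = ω ^ (2 ^ j * 3 ^ k)}

/-!
Locally uniform convergence of holomorphic functions passes to all derivatives (Weierstrass),
so it gives convergence of the Taylor coefficients at `0`.

Conversely, by Borel–Carathéodory a Carathéodory function satisfies the Harnack bound
`‖ψ z‖ ≤ (1 + ‖z‖) / (1 - ‖z‖)`, so by Cauchy's estimate on the circle of radius `r < 1` all
Carathéodory functions have Taylor coefficients bounded by `C_r / r ^ ℓ`. On `‖z‖ ≤ s < r`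
the Taylor series are then dominated by one geometric series, and dominated convergence for
series turns coefficientwise convergence into uniform convergence.
-/

theorem TendstoLocallyUniformlyOn.iteratedDeriv {ι E : Type*} [NormedAddCommGroup E]
    [NormedSpace ℂ E] [CompleteSpace E] {φ : Filter ι} {F : ι → ℂ → E} {f : ℂ → E}
    {U : Set ℂ} (hU : IsOpen U) (hf : TendstoLocallyUniformlyOn F f φ U)
    (hF : ∀ᶠ n in φ, DifferentiableOn ℂ (F n) U) (k : ℕ) :
    TendstoLocallyUniformlyOn (fun n => iteratedDeriv k (F n)) (iteratedDeriv k f) φ U := by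
  induction k generalizing F f with
  | zero => simpa only [iteratedDeriv_zero] using hf
  | succ k ih =>
    simp only [iteratedDeriv_succ']
    exact ih (hf.deriv hF hU) (hF.mono fun n hn => hn.deriv hU)

theorem hasSum_taylorCoef_mul_pow {f : ℂ → ℂ} {R : ℝ} (hf : DifferentiableOn ℂ f (ball 0 R))
    {z : ℂ} (hz : z ∈ ball 0 R) : HasSum (fun ℓ => taylorCoef f ℓ * z ^ ℓ) (f z) := by
  simpa only [taylorCoef, sub_zero, smul_eq_mul, div_mul_eq_mul_div, inv_mul_eq_div,
    mul_comm (z ^ _)] using Complex.hasSum_taylorSeries_on_ball hf hz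

theorem norm_taylorCoef_le_of_forall_mem_sphere_norm_le {f : ℂ → ℂ} {R C : ℝ} (hR : 0 < R)
    (hf : DiffContOnCl ℂ f (ball 0 R)) (hC : ∀ z ∈ sphere 0 R, ‖f z‖ ≤ C) (ℓ : ℕ) :
    ‖taylorCoef f ℓ‖ ≤ C / R ^ ℓ := by
  have hℓ : (0 : ℝ) < ℓ.factorial := mod_cast ℓ.factorial_pos
  rw [taylorCoef, norm_div, Complex.norm_natCast, div_le_iff₀ hℓ]
  calc ‖iteratedDeriv ℓ f 0‖ ≤ ℓ.factorial * C / R ^ ℓ :=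
        norm_iteratedDeriv_le_of_forall_mem_sphere_norm_le ℓ hR hf hC
    _ = C / R ^ ℓ * ℓ.factorial := by ring

theorem tendstoUniformlyOn_of_tendsto_coeff {ι : Type*} {l : Filter ι} {a : ι → ℕ → ℂ}
    {A : ℕ → ℂ} {f : ι → ℂ → ℂ} {F : ℂ → ℂ} {K : Set ℂ} {C s r : ℝ} (hs : 0 ≤ s) (hsr : s < r)
    (hK : K ⊆ closedBall 0 s) (hf : ∀ i, ∀ z ∈ K, HasSum (fun ℓ => a i ℓ * z ^ ℓ) (f i z))
    (hF : ∀ z ∈ K, HasSum (fun ℓ => A ℓ * z ^ ℓ) (F z))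
    (ha : ∀ ℓ, Tendsto (fun i => a i ℓ) l (𝓝 (A ℓ)))
    (ha_le : ∀ i ℓ, ‖a i ℓ‖ ≤ C / r ^ ℓ) (hA_le : ∀ ℓ, ‖A ℓ‖ ≤ C / r ^ ℓ) :
    TendstoUniformlyOn f F l K := by
  have hr : 0 < r := hs.trans_lt hsr
  have hbound : ∀ i ℓ, ‖‖A ℓ - a i ℓ‖ * s ^ ℓ‖ ≤ 2 * C * (s / r) ^ ℓ := fun i ℓ => by
    calc ‖‖A ℓ - a i ℓ‖ * s ^ ℓ‖ = ‖A ℓ - a i ℓ‖ * s ^ ℓ := Real.norm_of_nonneg (by positivity)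
      _ ≤ (C / r ^ ℓ + C / r ^ ℓ) * s ^ ℓ := by
        gcongr
        exact (norm_sub_le _ _).trans (add_le_add (hA_le ℓ) (ha_le i ℓ))
      _ = 2 * C * (s / r) ^ ℓ := by ring
  have hsummable : Summable fun ℓ => 2 * C * (s / r) ^ ℓ :=
    (summable_geometric_of_lt_one (by positivity) ((div_lt_one hr).2 hsr)).mul_left _
  have htail : Tendsto (fun i => ∑' ℓ, ‖A ℓ - a i ℓ‖ * s ^ ℓ) l (𝓝 0) := by
    have hterm : ∀ ℓ, Tendsto (fun i => ‖A ℓ - a i ℓ‖ * s ^ ℓ) l (𝓝 0) := fun ℓ => by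
      simpa using (((ha ℓ).const_sub (A ℓ)).norm.mul_const (s ^ ℓ))
    simpa using tendsto_tsum_of_dominated_convergence hsummable hterm
      (Eventually.of_forall hbound)
  have hdist : ∀ i, ∀ z ∈ K, dist (F z) (f i z) ≤ ∑' ℓ, ‖A ℓ - a i ℓ‖ * s ^ ℓ := fun i z hz => by
    have hzs : ‖z‖ ≤ s := mem_closedBall_zero_iff.1 (hK hz)
    rw [dist_eq_norm, ← ((hF z hz).sub (hf i z hz)).tsum_eq]
    refine tsum_of_norm_bounded ((hsummable.of_norm_bounded (hbound i)).hasSum) fun ℓ => ?_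
    rw [← sub_mul, norm_mul, norm_pow]
    gcongr
  rw [Metric.tendstoUniformlyOn_iff]
  intro ε hε
  filter_upwards [htail.eventually (gt_mem_nhds hε)] with i hi z hz
  exact (hdist i z hz).trans_lt hi

namespace IsCara

variable {ψ : ℂ → ℂ}

theorem norm_le_one_add_div_one_sub (hψ : IsCara ψ) {z : ℂ} (hz : z ∈ ball 0 1) :
    ‖ψ z‖ ≤ (1 + ‖z‖) / (1 - ‖z‖) := by
  obtain ⟨hd, hre, h0⟩ := hψ
  have hz1 : ‖z‖ < 1 := mem_ball_zero_iff.1 hz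
  have hBC : ‖1 - ψ z‖ ≤ 2 * ‖z‖ / (1 - ‖z‖) := by
    simpa using Complex.borelCaratheodory_zero one_pos (hd.const_sub 1)
      (fun w hw => by simpa using (hre w hw).le) one_pos hz (by rw [h0, sub_self])
  calc ‖ψ z‖ = ‖1 - (1 - ψ z)‖ := by rw [sub_sub_cancel]
    _ ≤ ‖(1 : ℂ)‖ + ‖1 - ψ z‖ := norm_sub_le _ _
    _ ≤ 1 + 2 * ‖z‖ / (1 - ‖z‖) := by rw [norm_one]; gcongr
    _ = (1 + ‖z‖) / (1 - ‖z‖) := by field_simp [(sub_pos.2 hz1).ne']; ring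

theorem norm_taylorCoef_le (hψ : IsCara ψ) {r : ℝ} (hr0 : 0 < r) (hr1 : r < 1) (ℓ : ℕ) :
    ‖taylorCoef ψ ℓ‖ ≤ (1 + r) / (1 - r) / r ^ ℓ := by
  refine norm_taylorCoef_le_of_forall_mem_sphere_norm_le hr0
    (hψ.1.diffContOnCl_ball (closedBall_subset_ball hr1)) (fun z hz => ?_) ℓ
  have hzr : ‖z‖ = r := mem_sphere_zero_iff_norm.1 hz
  simpa only [hzr] using hψ.norm_le_one_add_div_one_sub (mem_ball_zero_iff.2 (hzr.trans_lt hr1))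

end IsCara

theorem compactUniform_iff_taylor (ψs : ℕ → ℂ → ℂ) (ψ : ℂ → ℂ)
    (hψs : ∀ n, IsCara (ψs n)) (hψ : IsCara ψ) :
    CompactUniformTendsto ψs ψ ↔
      ∀ ℓ : ℕ, Tendsto (fun n => taylorCoef (ψs n) ℓ) atTop (𝓝 (taylorCoef ψ ℓ)) := by
  constructor
  · intro h ℓ
    have hloc : TendstoLocallyUniformlyOn ψs ψ atTop (ball 0 1) :=
      (tendstoLocallyUniformlyOn_iff_forall_isCompact isOpen_ball).2 h
    exact ((hloc.iteratedDeriv isOpen_ball (Eventually.of_forall fun n => (hψs n).1) ℓ).tendsto_at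
      (mem_ball_self one_pos)).div_const _
  · intro h K hK1 hK
    obtain ⟨s, ⟨hs0, hs1⟩, hKs⟩ := exists_pos_lt_subset_ball one_pos hK.isClosed hK1
    obtain ⟨r, hsr, hr1⟩ := exists_between hs1
    have hr0 : 0 < r := hs0.trans hsr
    exact tendstoUniformlyOn_of_tendsto_coeff hs0.le hsr (hKs.trans ball_subset_closedBall)
      (fun n z hz => hasSum_taylorCoef_mul_pow (hψs n).1 (hK1 hz))
      (fun z hz => hasSum_taylorCoef_mul_pow hψ.1 (hK1 hz)) h
      (fun n => (hψs n).norm_taylorCoef_le hr0 hr1) (hψ.norm_taylorCoef_le hr0 hr1)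

end
end

section
/- Let μ be a finitely supported ergodic ×(2,3)-invariant Borel probability measure on the unit circle 𝕋. Then there exists a root of unity ω ∈ 𝕋 such that μ = (1/|O(ω)|) Σ_{ϑ ∈ O(ω)} δ_ϑ, where O(ω) = {ω^{2^j 3^k} : j, k ∈ ℕ} and δ_ϑ is the Dirac point mass at ϑ. -/
open MeasureTheory Metric Complex Filter Topology
open scoped ENNReal NNReal

noncomputable section

/-!
Invariance under `x ↦ x²` and `x ↦ x³` means that no atom of `μ` outweighs its images. As the
support is finite, there is an atom `ω` of maximal mass `c > 0`, and then every point of its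
orbit `O` has mass exactly `c`. So `O` is finite, and squaring and cubing permute it, since two
preimages of one point would give it mass `2c`. Hence `μ` restricted to `O` is `c` times the
counting measure of `O` and is invariant, and so is `μ` restricted to `Oᶜ`: ergodicity forbids
this splitting unless `μ O = 1`. Finiteness of `O` makes `ω` a root of unity.
-/

namespace MeasureTheory.Measure

variable {α : Type*} [MeasurableSpace α]

lemma measurePreserving_sum_dirac {f : α → α} (hf : Measurable f) {s : Finset α}
    (hs : Set.BijOn f s s) :
    MeasurePreserving f (∑ x ∈ s, dirac x) (∑ x ∈ s, dirac x) := by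
  refine ⟨hf, ?_⟩
  rw [← mapₗ_apply_of_measurable hf, _root_.map_sum]
  simp_rw [mapₗ_apply_of_measurable hf, map_dirac' hf]
  exact Finset.sum_nbij f hs.mapsTo hs.injOn hs.surjOn fun _ _ => rfl

variable {μ : Measure α}

lemma eq_inv_card_smul_sum_dirac_of_eq_smul [IsProbabilityMeasure μ] {s : Finset α}
    {c : ℝ≥0∞} (hμ : μ = c • ∑ x ∈ s, dirac x) :
    μ = (s.card : ℝ≥0∞)⁻¹ • ∑ x ∈ s, dirac x := by
  have hc : c * s.card = 1 := by
    simpa [hμ, finsetSum_apply, mul_comm] using measure_univ (μ := μ)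
  rwa [← ENNReal.eq_inv_of_mul_eq_one_left hc]

variable [MeasurableSingletonClass α]

lemma restrict_eq_smul_sum_dirac {s : Set α} (hs : s.Finite) {c : ℝ≥0∞}
    (hsc : ∀ x ∈ s, μ {x} = c) : μ.restrict s = c • ∑ x ∈ hs.toFinset, dirac x := by
  have hae : ∀ᵐ x ∂μ.restrict s, x ∈ hs.toFinset := by
    simpa only [Set.Finite.mem_toFinset] using ae_restrict_mem hs.measurableSet
  rw [ae_mem_finset_iff.1 hae, Finset.smul_sum]
  refine Finset.sum_congr rfl fun x hx => ?_
  rw [hs.mem_toFinset] at hx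
  rw [restrict_apply (measurableSet_singleton x),
    Set.inter_eq_left.2 (Set.singleton_subset_iff.2 hx), hsc x hx]

lemma exists_measure_singleton_max [NeZero μ] {s : Set α} (hs : s.Finite)
    (hμs : ∀ᵐ x ∂μ, x ∈ s) : ∃ ω, μ {ω} ≠ 0 ∧ ∀ x, μ {x} ≤ μ {ω} := by
  have hμ : μ = ∑ x ∈ hs.toFinset, μ {x} • dirac x :=
    ae_mem_finset_iff.1 (by simpa only [Set.Finite.mem_toFinset] using hμs)
  have hne : hs.toFinset.Nonempty := by
    by_contra h
    rw [Finset.not_nonempty_iff_eq_empty.1 h, Finset.sum_empty] at hμ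
    exact NeZero.ne μ hμ
  obtain ⟨ω, hω, hmax⟩ := hs.toFinset.exists_max_image (fun x => μ {x}) hne
  have hmax' : ∀ x, μ {x} ≤ μ {ω} := by
    intro x
    by_cases hx : x ∈ hs.toFinset
    · exact hmax x hx
    · rw [measure_mono_null (Set.singleton_subset_iff.2 (by simpa using hx)) (ae_iff.1 hμs)]
      exact zero_le
  refine ⟨ω, fun hω0 => NeZero.ne μ ?_, hmax'⟩
  rw [hμ]
  exact Finset.sum_eq_zero fun x _ => by
    rw [nonpos_iff_eq_zero.1 ((hmax' x).trans hω0.le), zero_smul]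

end MeasureTheory.Measure

namespace MeasureTheory.MeasurePreserving

variable {α : Type*} [MeasurableSpace α] {μ : Measure α} {f : α → α}

lemma restrict_compl [IsFiniteMeasure μ] {s : Set α} (hs : MeasurableSet s)
    (hf : MeasurePreserving f μ μ) (hfs : MeasurePreserving f (μ.restrict s) (μ.restrict s)) :
    MeasurePreserving f (μ.restrict sᶜ) (μ.restrict sᶜ) := by
  refine ⟨hf.measurable, Measure.ext fun t ht => ?_⟩
  have hsum : μ.map f t = μ t := by rw [hf.map_eq]
  rw [← Measure.restrict_add_restrict_compl (μ := μ) hs, Measure.map_add _ _ hf.measurable,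
    hfs.map_eq, Measure.add_apply, Measure.add_apply] at hsum
  exact (ENNReal.add_right_inj (measure_ne_top _ _)).1 hsum

variable [MeasurableSingletonClass α]

lemma measure_singleton_le (hf : MeasurePreserving f μ μ) (x : α) : μ {x} ≤ μ {f x} :=
  calc μ {x} ≤ μ (f ⁻¹' {f x}) := measure_mono (Set.singleton_subset_iff.2 rfl)
    _ = μ {f x} := hf.measure_preimage (measurableSet_singleton _).nullMeasurableSet

lemma measure_singleton_eq_max (hf : MeasurePreserving f μ μ) {c : ℝ≥0∞}
    (hmax : ∀ y, μ {y} ≤ c) {x : α} (hx : μ {x} = c) : μ {f x} = c :=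
  le_antisymm (hmax _) (hx ▸ hf.measure_singleton_le x)

lemma measure_singleton_add_le (hf : MeasurePreserving f μ μ) {x y : α} (hxy : x ≠ y)
    (hfxy : f x = f y) : μ {x} + μ {y} ≤ μ {f x} :=
  calc μ {x} + μ {y} = μ ({x} ∪ {y}) :=
        (measure_union (Set.disjoint_singleton.2 hxy) (measurableSet_singleton y)).symm
    _ ≤ μ (f ⁻¹' {f x}) := measure_mono (Set.union_subset (by simp) (by simp [hfxy]))
    _ = μ {f x} := hf.measure_preimage (measurableSet_singleton _).nullMeasurableSet

lemma injOn_of_measure_singleton_eq_max (hf : MeasurePreserving f μ μ) {s : Set α}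
    {c : ℝ≥0∞} (hc0 : c ≠ 0) (hc : c ≠ ∞) (hmax : ∀ x, μ {x} ≤ c)
    (hsc : ∀ x ∈ s, μ {x} = c) : s.InjOn f := by
  intro x hx y hy hfxy
  by_contra hxy
  have := (hf.measure_singleton_add_le hxy hfxy).trans (hmax _)
  rw [hsc x hx, hsc y hy] at this
  exact (ENNReal.lt_add_right hc hc0).not_ge this

lemma restrict_of_measure_singleton_eq_max (hf : MeasurePreserving f μ μ) {s : Set α}
    (hs : s.Finite) (hmaps : Set.MapsTo f s s) {c : ℝ≥0∞} (hc0 : c ≠ 0) (hc : c ≠ ∞)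
    (hmax : ∀ x, μ {x} ≤ c) (hsc : ∀ x ∈ s, μ {x} = c) :
    MeasurePreserving f (μ.restrict s) (μ.restrict s) := by
  have hbij := (hs.injOn_iff_bijOn_of_mapsTo hmaps).1
    (hf.injOn_of_measure_singleton_eq_max hc0 hc hmax hsc)
  rw [Measure.restrict_eq_smul_sum_dirac hs hsc]
  rw [← hs.coe_toFinset] at hbij
  exact (Measure.measurePreserving_sum_dirac hf.measurable hbij).smul_measure c

end MeasureTheory.MeasurePreserving

lemma mulInvariant_iff_measurePreserving {n : ℕ} {μ : Measure Circle} [IsFiniteMeasure μ] :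
    MulInvariant n μ ↔ MeasurePreserving (· ^ n) μ μ := by
  have hmeas : Measurable fun ω : Circle => ω ^ n := (continuous_pow n).measurable
  refine ⟨fun h => ⟨hmeas, ?_⟩, fun h f => ?_⟩
  · refine ext_of_forall_integral_eq_of_IsFiniteMeasure fun f => ?_
    have hf := h ⟨fun ω => (f ω : ℂ), by fun_prop⟩
    simp only [ContinuousMap.coe_mk] at hf
    rw [integral_map hmeas.aemeasurable f.continuous.aestronglyMeasurable]
    exact_mod_cast hf
  · rw [← integral_map hmeas.aemeasurable f.continuous.aestronglyMeasurable, h.map_eq]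

lemma ae_mem_msupport (μ : Measure Circle) [IsProbabilityMeasure μ] :
    ∀ᵐ ω ∂μ, ω ∈ msupport μ := by
  have hopen : ∀ t ∈ compl '' {s : Set Circle | IsClosed s ∧ μ s = 1}, IsOpen t := by
    rintro t ⟨s, ⟨hs, -⟩, rfl⟩
    exact hs.isOpen_compl
  obtain ⟨T, hTc, hTsub, hTU⟩ := TopologicalSpace.isOpen_sUnion_countable _ hopen
  rw [ae_iff]
  change μ (msupport μ)ᶜ = 0
  rw [msupport, Set.compl_sInter, ← hTU, measure_sUnion_null_iff hTc]
  intro t ht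
  obtain ⟨s, ⟨hs, hμs⟩, rfl⟩ := hTsub ht
  exact (prob_compl_eq_zero_iff hs.measurableSet).2 hμs

lemma mem_msupport_of_measure_singleton_ne_zero {μ : Measure Circle} [IsProbabilityMeasure μ]
    {ω : Circle} (hω : μ {ω} ≠ 0) : ω ∈ msupport μ := by
  rintro s ⟨hs, hμs⟩
  by_contra hωs
  exact hω (measure_mono_null (Set.singleton_subset_iff.2 hωs)
    ((prob_compl_eq_zero_iff hs.measurableSet).2 hμs))

lemma self_mem_orbit23 (ω : Circle) : ω ∈ orbit23 ω := ⟨0, 0, by simp⟩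

lemma sq_mem_orbit23 {ω ϑ : Circle} (hϑ : ϑ ∈ orbit23 ω) : ϑ ^ 2 ∈ orbit23 ω := by
  obtain ⟨j, k, rfl⟩ := hϑ
  exact ⟨j + 1, k, by rw [← pow_mul]; ring_nf⟩

lemma pow_three_mem_orbit23 {ω ϑ : Circle} (hϑ : ϑ ∈ orbit23 ω) : ϑ ^ 3 ∈ orbit23 ω := by
  obtain ⟨j, k, rfl⟩ := hϑ
  exact ⟨j, k + 1, by rw [← pow_mul]; ring_nf⟩

lemma orbit23_subset {ω : Circle} {s : Set Circle} (hω : ω ∈ s) (h2 : ∀ ϑ ∈ s, ϑ ^ 2 ∈ s)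
    (h3 : ∀ ϑ ∈ s, ϑ ^ 3 ∈ s) : orbit23 ω ⊆ s := by
  rintro _ ⟨j, k, rfl⟩
  induction j with
  | zero =>
    induction k with
    | zero => simpa using hω
    | succ k ih =>
      rw [show 2 ^ 0 * 3 ^ (k + 1) = 2 ^ 0 * 3 ^ k * 3 by ring, pow_mul]
      exact h3 _ ih
  | succ j ih =>
    rw [show 2 ^ (j + 1) * 3 ^ k = 2 ^ j * 3 ^ k * 2 by ring, pow_mul]
    exact h2 _ ih

lemma exists_pow_eq_one_of_finite_orbit23 {ω : Circle} (h : (orbit23 ω).Finite) :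
    ∃ d : ℕ, 0 < d ∧ ω ^ d = 1 := by
  have hmaps : Set.MapsTo (fun j : ℕ => ω ^ 2 ^ j) Set.univ (orbit23 ω) :=
    fun j _ => ⟨j, 0, by simp⟩
  obtain ⟨a, -, b, -, hab, heq⟩ := Set.infinite_univ.exists_ne_map_eq_of_mapsTo hmaps h
  wlog hlt : a < b generalizing a b
  · exact this b a hab.symm heq.symm (hab.lt_or_gt.resolve_left hlt)
  have hpow : 2 ^ a < 2 ^ b := Nat.pow_lt_pow_right one_lt_two hlt
  refine ⟨2 ^ b - 2 ^ a, Nat.sub_pos_of_lt hpow, mul_left_cancel (a := ω ^ 2 ^ a) ?_⟩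
  rw [mul_one, ← pow_add, Nat.add_sub_cancel' hpow.le, heq]

lemma inv23_inv_measure_univ_smul {ρ : Measure Circle} [IsFiniteMeasure ρ] [NeZero ρ]
    (h2 : MeasurePreserving (· ^ 2) ρ ρ) (h3 : MeasurePreserving (· ^ 3) ρ ρ) :
    Inv23 ((ρ Set.univ)⁻¹ • ρ) :=
  ⟨inferInstance, mulInvariant_iff_measurePreserving.2 (h2.smul_measure _),
    mulInvariant_iff_measurePreserving.2 (h3.smul_measure _)⟩

lemma Ergodic23.measure_eq_one {μ : Measure Circle} (hμ : Ergodic23 μ) {s : Set Circle}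
    (hs : MeasurableSet s) (hs0 : μ s ≠ 0)
    (h2 : MeasurePreserving (· ^ 2) (μ.restrict s) (μ.restrict s))
    (h3 : MeasurePreserving (· ^ 3) (μ.restrict s) (μ.restrict s)) : μ s = 1 := by
  obtain ⟨⟨hprob, hμ2, hμ3⟩, herg⟩ := hμ
  rcases (prob_le_one (μ := μ) (s := s)).eq_or_lt with hs1 | hs1
  · exact hs1
  have hsc0 : μ sᶜ ≠ 0 := by
    rw [prob_compl_eq_one_sub hs]
    exact (tsub_pos_of_lt hs1).ne'
  have : NeZero (μ.restrict s) := ⟨by rwa [Ne, Measure.restrict_eq_zero]⟩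
  have : NeZero (μ.restrict sᶜ) := ⟨by rwa [Ne, Measure.restrict_eq_zero]⟩
  have hκ := inv23_inv_measure_univ_smul h2 h3
  have hν := inv23_inv_measure_univ_smul
    ((mulInvariant_iff_measurePreserving.1 hμ2).restrict_compl hs h2)
    ((mulInvariant_iff_measurePreserving.1 hμ3).restrict_compl hs h3)
  rw [Measure.restrict_apply_univ] at hκ hν
  have hdecomp : μ = μ s • (μ s)⁻¹ • μ.restrict s + (1 - μ s) • (μ sᶜ)⁻¹ • μ.restrict sᶜ := by
    rw [← prob_compl_eq_one_sub hs, smul_smul, smul_smul,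
      ENNReal.mul_inv_cancel hs0 (measure_ne_top _ _),
      ENNReal.mul_inv_cancel hsc0 (measure_ne_top _ _), one_smul, one_smul,
      Measure.restrict_add_restrict_compl hs]
  obtain ⟨hκμ, -⟩ := herg _ _ (μ s) hκ hν (pos_iff_ne_zero.2 hs0) hs1 hdecomp
  calc μ s = ((μ s)⁻¹ • μ.restrict s) s := by rw [hκμ]
    _ = 1 := by
      rw [Measure.smul_apply, Measure.restrict_apply_self, smul_eq_mul,
        ENNReal.inv_mul_cancel hs0 (measure_ne_top _ _)]

theorem ergodic_finite_eq_uniform_orbit (μ : Measure Circle) (hμ : Ergodic23 μ)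
    (hfin : (msupport μ).Finite) :
    ∃ ω : Circle, (∃ d : ℕ, 0 < d ∧ ω ^ d = 1) ∧
      ∃ hofin : (orbit23 ω).Finite,
        μ = (hofin.toFinset.card : ℝ≥0∞)⁻¹ • ∑ ϑ ∈ hofin.toFinset, Measure.dirac ϑ := by
  obtain ⟨hprob, hμ2, hμ3⟩ := hμ.1
  have h2 := mulInvariant_iff_measurePreserving.1 hμ2
  have h3 := mulInvariant_iff_measurePreserving.1 hμ3
  obtain ⟨ω, hω0, hmax⟩ := Measure.exists_measure_singleton_max hfin (ae_mem_msupport μ)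
  have hmass : ∀ ϑ ∈ orbit23 ω, μ {ϑ} = μ {ω} :=
    orbit23_subset (s := {ϑ | μ {ϑ} = μ {ω}}) rfl
      (fun _ => h2.measure_singleton_eq_max hmax) (fun _ => h3.measure_singleton_eq_max hmax)
  have hofin : (orbit23 ω).Finite := hfin.subset fun ϑ hϑ =>
    mem_msupport_of_measure_singleton_ne_zero (by rwa [hmass ϑ hϑ])
  have hfull : μ (orbit23 ω) = 1 := hμ.measure_eq_one hofin.measurableSet
    (fun h => hω0 (measure_mono_null (Set.singleton_subset_iff.2 (self_mem_orbit23 ω)) h))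
    (h2.restrict_of_measure_singleton_eq_max hofin (fun _ => sq_mem_orbit23) hω0
      (measure_ne_top _ _) hmax hmass)
    (h3.restrict_of_measure_singleton_eq_max hofin (fun _ => pow_three_mem_orbit23) hω0
      (measure_ne_top _ _) hmax hmass)
  have hμO : μ = μ.restrict (orbit23 ω) := (Measure.restrict_eq_self_of_ae_mem
    (ae_iff.2 ((prob_compl_eq_zero_iff hofin.measurableSet).2 hfull))).symm
  exact ⟨ω, exists_pow_eq_one_of_finite_orbit23 hofin, hofin,
    Measure.eq_inv_card_smul_sum_dirac_of_eq_smul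
      (hμO.trans (Measure.restrict_eq_smul_sum_dirac hofin hmass))⟩

end
end
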